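/- Fix p ∈ (0,1). For any t ≥ 0 and any Boolean function f : {-1,1}^n → {-1,1}, Var(f) - Var(P_t f) = 1 - E|P_t f|² ≤ 2 max{p, 1-p} √(π(1 - e^{-2t})) · E|∇f|. -/

import Mathlib

open Finset Real
open scoped Classical

noncomputable def wt (p : ℝ) (n : ℕ) (x : Fin n → Bool) : ℝ :=
  ∏ i, if x i then p else 1 - p

noncomputable def ex (p : ℝ) (n : ℕ) (f : (Fin n → Bool) → ℝ) : ℝ :=
  ∑ x : Fin n → Bool, wt p n x * f x

noncomputable def var (p : ℝ) (n : ℕ) (f : (Fin n → Bool) → ℝ) : ℝ :=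
  ex p n (fun x => f x ^ 2) - (ex p n f) ^ 2

def flipC {n : ℕ} (j : Fin n) (x : Fin n → Bool) : Fin n → Bool :=
  Function.update x j (!(x j))

noncomputable def Dj {n : ℕ} (j : Fin n) (f : (Fin n → Bool) → ℝ) (x : Fin n → Bool) : ℝ :=
  (f x - f (flipC j x)) / 2

noncomputable def gradNorm {n : ℕ} (f : (Fin n → Bool) → ℝ) (x : Fin n → Bool) : ℝ :=
  Real.sqrt (∑ j, (Dj j f x) ^ 2)

noncomputable def condExpJ (p : ℝ) {n : ℕ} (j : Fin n) (f : (Fin n → Bool) → ℝ)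
    (x : Fin n → Bool) : ℝ :=
  p * f (Function.update x j true) + (1 - p) * f (Function.update x j false)

noncomputable def infl (p : ℝ) (n : ℕ) (j : Fin n) (f : (Fin n → Bool) → ℝ) : ℝ :=
  ex p n (fun x => |f x - condExpJ p j f x|)

noncomputable def heatPt (p t : ℝ) (n : ℕ) (f : (Fin n → Bool) → ℝ)
    (x : Fin n → Bool) : ℝ :=
  ∑ y : Fin n → Bool,
    (∏ j, ((if y j = x j then Real.exp (-t) else 0)
      + (1 - Real.exp (-t)) * (if y j then p else 1 - p))) * f y

noncomputable def lpNorm (p : ℝ) (n : ℕ) (r : ℝ) (f : (Fin n → Bool) → ℝ) : ℝ :=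
  (ex p n (fun x => |f x| ^ r)) ^ (1 / r)

noncomputable def sens {n : ℕ} (f : (Fin n → Bool) → ℝ) (x : Fin n → Bool) : ℝ :=
  ((Finset.univ.filter (fun j : Fin n => f x ≠ f (flipC j x))).card : ℝ)

noncomputable def hEdge {n : ℕ} (f : (Fin n → Bool) → ℝ) (x : Fin n → Bool) : ℝ :=
  if f x = 1 then ((Finset.univ.filter (fun j : Fin n => f (flipC j x) ≠ 1)).card : ℝ) else 0

/-!
Write `T_r` for the noise operator with correlation `r`, so that `P_t = T_{e^{-t}}`, and
`Ψ(r) = E[f · T_r f]`. Reversibility and `T_r T_r = T_{r²}` give `E|P_t f|² = Ψ(e^{-2t})`;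
together with `E[P_t f] = E f` and `Ψ(1) = E f² = 1` this is the variance identity.

Differentiating the product kernel in `r`, a one-bit covariance identity gives
`Ψ'(r) = 4 p (1 - p) Σ_j E[∂_j f · T_r ∂_j f]` with `∂_j f = (f(x^{j→1}) - f(x^{j→0})) / 2`.
Under `T_r(x, ·)` the scores of the output bits are orthogonal, with second moments
`1 / (k_1 k_0) ≤ 1 / (s (1 - s))` for `s = (1 - r) min(p, 1 - p)`, and integration by parts gives
`E[f · score_j] = 2 T_r ∂_j f(x)`. Cauchy–Schwarz against `|f| ≤ 1` then yields
`Σ_j (T_r ∂_j f)² ≤ 1 / (4 s (1 - s))`, so `Ψ'(1 - u) ≤ 2 p (1 - p) E|∇f| / √(a u (1 - a u))` with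
`a = min(p, 1 - p)`. Integrating over `[0, 1 - e^{-2t}]` gives
`4 max(p, 1 - p) E|∇f| arcsin √(a (1 - e^{-2t}))`, and since `a ≤ 1/2` the concavity of `sin`
bounds `2 arcsin √(a d)` by `√(π d)`.
-/

noncomputable def bitProb (p : ℝ) (b : Bool) : ℝ := if b then p else 1 - p

noncomputable def bitKernel (p r : ℝ) (a b : Bool) : ℝ :=
  (if b = a then r else 0) + (1 - r) * bitProb p b

noncomputable def noiseKernel (p r : ℝ) {n : ℕ} (x y : Fin n → Bool) : ℝ :=
  ∏ i, bitKernel p r (x i) (y i)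

noncomputable def noiseOp (p r : ℝ) {n : ℕ} (f : (Fin n → Bool) → ℝ) (x : Fin n → Bool) : ℝ :=
  ∑ y, noiseKernel p r x y * f y

noncomputable def stability (p : ℝ) (n : ℕ) (f : (Fin n → Bool) → ℝ) (r : ℝ) : ℝ :=
  ex p n (fun x => f x * noiseOp p r f x)

noncomputable def coordDiff {n : ℕ} (f : (Fin n → Bool) → ℝ) (j : Fin n) (x : Fin n → Bool) :
    ℝ :=
  (f (Function.update x j true) - f (Function.update x j false)) / 2

section ProductSums

variable {n : ℕ}

lemma sum_prod_apply_bool (F : Fin n → Bool → ℝ) :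
    ∑ x : Fin n → Bool, ∏ i, F i (x i) = ∏ i, (F i true + F i false) := by
  simp only [← Fintype.sum_bool, Fintype.prod_sum]

lemma prod_update_apply (F : Fin n → Bool → ℝ) (x : Fin n → Bool) (j : Fin n) (b : Bool) :
    ∏ i, F i (Function.update x j b i) = F j b * ∏ i ∈ univ.erase j, F i (x i) := by
  rw [← mul_prod_erase univ _ (mem_univ j), Function.update_self]
  congr 1
  exact prod_congr rfl fun i hi => by rw [Function.update_of_ne (ne_of_mem_erase hi)]

lemma flipC_flipC (j : Fin n) (x : Fin n → Bool) : flipC j (flipC j x) = x := by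
  simp [flipC, Function.update_idem]

lemma update_true_add_update_false (F : (Fin n → Bool) → ℝ) (j : Fin n) (x : Fin n → Bool) :
    F (Function.update x j true) + F (Function.update x j false) = F x + F (flipC j x) := by
  cases hx : x j
  · rw [← hx, Function.update_eq_self, flipC, hx, Bool.not_false, add_comm]
  · rw [← hx, Function.update_eq_self, flipC, hx, Bool.not_true]

lemma sum_sum_update (F : (Fin n → Bool) → ℝ) (j : Fin n) :
    ∑ x, ∑ b, F (Function.update x j b) = 2 * ∑ x, F x := by
  have hflip : ∑ x, F (flipC j x) = ∑ x, F x :=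
    Fintype.sum_bijective _ (Function.Involutive.bijective (flipC_flipC j)) _ _ fun _ => rfl
  simp only [Fintype.sum_bool, update_true_add_update_false, sum_add_distrib, hflip]
  ring

lemma four_mul_sum_sum (F : (Fin n → Bool) → (Fin n → Bool) → ℝ) (j : Fin n) :
    4 * ∑ x, ∑ y, F x y
      = ∑ x, ∑ y, ∑ a, ∑ b, F (Function.update x j a) (Function.update y j b) := by
  have hinner : ∀ x, 2 * ∑ y, F x y = ∑ y, ∑ b, F x (Function.update y j b) := fun x =>
    (sum_sum_update (F x) j).symm
  calc 4 * ∑ x, ∑ y, F x y = 2 * ∑ x, ∑ y, ∑ b, F x (Function.update y j b) := by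
        simp only [← hinner, ← mul_sum]; ring
    _ = ∑ x, ∑ a, ∑ y, ∑ b, F (Function.update x j a) (Function.update y j b) :=
        (sum_sum_update (fun x => ∑ y, ∑ b, F x (Function.update y j b)) j).symm
    _ = _ := sum_congr rfl fun x _ => sum_comm

lemma two_mul_sum_prod_mul (k : Fin n → Bool → ℝ) (G : (Fin n → Bool) → ℝ) (j : Fin n) :
    2 * ∑ y, (∏ i, k i (y i)) * G y
      = ∑ y, (∏ i ∈ univ.erase j, k i (y i)) * ∑ b, k j b * G (Function.update y j b) := by
  rw [← sum_sum_update _ j]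
  refine sum_congr rfl fun y _ => ?_
  rw [mul_sum]
  exact sum_congr rfl fun b _ => by rw [prod_update_apply]; ring

lemma sum_prod_erase_mul_of_update_eq (k : Fin n → Bool → ℝ) {j : Fin n}
    (hk : k j true + k j false = 1) {G : (Fin n → Bool) → ℝ}
    (hG : ∀ y b, G (Function.update y j b) = G y) :
    ∑ y, (∏ i ∈ univ.erase j, k i (y i)) * G y = 2 * ∑ y, (∏ i, k i (y i)) * G y := by
  rw [two_mul_sum_prod_mul k G j]
  simp only [hG, Fintype.sum_bool, ← add_mul, hk, one_mul]

end ProductSums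

section BitKernel

variable {p r : ℝ}

lemma bitProb_pos (hp : p ∈ Set.Ioo (0:ℝ) 1) (b : Bool) : 0 < bitProb p b := by
  cases b <;> simp [bitProb, hp.1, hp.2]

lemma bitProb_true_add_false (p : ℝ) : bitProb p true + bitProb p false = 1 := by
  simp [bitProb]

lemma bitKernel_true_add_false (p r : ℝ) (a : Bool) :
    bitKernel p r a true + bitKernel p r a false = 1 := by
  cases a <;>
    simp only [bitKernel, bitProb, ↓reduceIte, Bool.false_eq_true, Bool.true_eq_false,
      zero_add] <;> ring

lemma bitKernel_pos (hp : p ∈ Set.Ioo (0:ℝ) 1) (hr0 : 0 ≤ r) (hr1 : r < 1) (a b : Bool) :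
    0 < bitKernel p r a b := by
  have := bitProb_pos hp b
  unfold bitKernel; split <;> nlinarith

lemma bitKernel_one (p : ℝ) (a b : Bool) : bitKernel p 1 a b = if b = a then 1 else 0 := by
  unfold bitKernel; split <;> ring

lemma sum_bitProb_mul_bitKernel (p r : ℝ) (b : Bool) :
    bitProb p true * bitKernel p r true b + bitProb p false * bitKernel p r false b
      = bitProb p b := by
  cases b <;>
    simp only [bitKernel, bitProb, ↓reduceIte, Bool.false_eq_true, Bool.true_eq_false,
      zero_add] <;> ring

/-- Reversibility of the one-bit kernel together with the semigroup law `k_r k_r = k_{r r}`. -/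
lemma sum_bitProb_mul_bitKernel_mul_bitKernel (p r : ℝ) (b c : Bool) :
    bitProb p true * bitKernel p r true b * bitKernel p r true c
      + bitProb p false * bitKernel p r false b * bitKernel p r false c
      = bitProb p b * bitKernel p (r * r) b c := by
  cases b <;> cases c <;>
    simp only [bitKernel, bitProb, ↓reduceIte, Bool.false_eq_true, Bool.true_eq_false,
      zero_add] <;> ring

end BitKernel

section NoiseOperator

variable {n : ℕ} {p r : ℝ}

lemma wt_eq_prod_bitProb (p : ℝ) (n : ℕ) (x : Fin n → Bool) :
    wt p n x = ∏ i, bitProb p (x i) := rfl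

lemma heatPt_eq_noiseOp (p t : ℝ) (n : ℕ) (f : (Fin n → Bool) → ℝ) :
    heatPt p t n f = noiseOp p (exp (-t)) f := rfl

lemma wt_nonneg (hp : p ∈ Set.Ioo (0:ℝ) 1) (x : Fin n → Bool) : 0 ≤ wt p n x :=
  prod_nonneg fun _ _ => (bitProb_pos hp _).le

lemma sum_wt (p : ℝ) (n : ℕ) : ∑ x : Fin n → Bool, wt p n x = 1 := by
  simp [wt_eq_prod_bitProb, sum_prod_apply_bool, bitProb_true_add_false]

lemma ex_nonneg (hp : p ∈ Set.Ioo (0:ℝ) 1) {f : (Fin n → Bool) → ℝ} (hf : ∀ x, 0 ≤ f x) :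
    0 ≤ ex p n f :=
  sum_nonneg fun x _ => mul_nonneg (wt_nonneg hp x) (hf x)

lemma ex_mono (hp : p ∈ Set.Ioo (0:ℝ) 1) {f g : (Fin n → Bool) → ℝ} (hfg : ∀ x, f x ≤ g x) :
    ex p n f ≤ ex p n g :=
  sum_le_sum fun x _ => mul_le_mul_of_nonneg_left (hfg x) (wt_nonneg hp x)

lemma sum_ex {ι : Type*} [Fintype ι] (F : ι → (Fin n → Bool) → ℝ) :
    ∑ j, ex p n (F j) = ex p n (fun x => ∑ j, F j x) := by
  simp only [ex, mul_sum]
  exact sum_comm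

lemma ex_div (f : (Fin n → Bool) → ℝ) (c : ℝ) : ex p n (fun x => f x / c) = ex p n f / c := by
  simp only [ex, mul_div_assoc', sum_div]

lemma ex_sq_of_boolean {f : (Fin n → Bool) → ℝ} (hf : ∀ x, f x = 1 ∨ f x = -1) :
    ex p n (fun x => f x ^ 2) = 1 := by
  have hf2 : ∀ x, f x ^ 2 = 1 := fun x => by rcases hf x with h | h <;> simp [h]
  simp only [ex, hf2, mul_one, sum_wt]

lemma noiseKernel_nonneg (hp : p ∈ Set.Ioo (0:ℝ) 1) (hr0 : 0 ≤ r) (hr1 : r < 1)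
    (x y : Fin n → Bool) : 0 ≤ noiseKernel p r x y :=
  prod_nonneg fun _ _ => (bitKernel_pos hp hr0 hr1 _ _).le

lemma sum_noiseKernel (p r : ℝ) (x : Fin n → Bool) : ∑ y, noiseKernel p r x y = 1 := by
  simp [noiseKernel, sum_prod_apply_bool, bitKernel_true_add_false]

lemma sum_wt_mul_noiseKernel (p r : ℝ) (y : Fin n → Bool) :
    ∑ x, wt p n x * noiseKernel p r x y = wt p n y := by
  simp only [wt_eq_prod_bitProb, noiseKernel, ← prod_mul_distrib]
  rw [sum_prod_apply_bool (fun i b => bitProb p b * bitKernel p r b (y i))]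
  exact prod_congr rfl fun _ _ => sum_bitProb_mul_bitKernel p r _

lemma sum_wt_mul_noiseKernel_mul_noiseKernel (p r : ℝ) (y z : Fin n → Bool) :
    ∑ x, wt p n x * (noiseKernel p r x y * noiseKernel p r x z)
      = wt p n y * noiseKernel p (r * r) y z := by
  simp only [wt_eq_prod_bitProb, noiseKernel, ← prod_mul_distrib, ← mul_assoc]
  rw [sum_prod_apply_bool (fun i b => bitProb p b * bitKernel p r b (y i) * bitKernel p r b (z i))]
  exact prod_congr rfl fun _ _ => sum_bitProb_mul_bitKernel_mul_bitKernel p r _ _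

lemma noiseOp_one (p : ℝ) (f : (Fin n → Bool) → ℝ) : noiseOp p 1 f = f := by
  funext x
  have hK : ∀ y, noiseKernel p 1 x y = if y = x then 1 else 0 := fun y => by
    simp only [noiseKernel, bitKernel_one]
    split_ifs with h
    · simp [h]
    · obtain ⟨i, hi⟩ := Function.ne_iff.1 h
      exact prod_eq_zero (mem_univ i) (if_neg hi)
  simp [noiseOp, hK]

lemma ex_noiseOp (p r : ℝ) (f : (Fin n → Bool) → ℝ) : ex p n (noiseOp p r f) = ex p n f := by
  simp only [ex, noiseOp, mul_sum]
  rw [sum_comm]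
  refine sum_congr rfl fun y _ => ?_
  simp only [← mul_assoc, ← sum_mul, sum_wt_mul_noiseKernel]

lemma ex_noiseOp_sq (p r : ℝ) (f : (Fin n → Bool) → ℝ) :
    ex p n (fun x => noiseOp p r f x ^ 2) = stability p n f (r * r) := by
  have hexpand : ∀ x, wt p n x * noiseOp p r f x ^ 2
      = ∑ y, ∑ z, f y * f z * (wt p n x * (noiseKernel p r x y * noiseKernel p r x z)) :=
    fun x => by
      rw [noiseOp, sq, sum_mul_sum, mul_sum]
      exact sum_congr rfl fun y _ => by rw [mul_sum]; exact sum_congr rfl fun z _ => by ring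
  rw [ex, sum_congr rfl fun x _ => hexpand x, sum_comm, stability, ex]
  refine sum_congr rfl fun y _ => ?_
  rw [sum_comm, noiseOp, mul_sum, mul_sum]
  refine sum_congr rfl fun z _ => ?_
  rw [← mul_sum, sum_wt_mul_noiseKernel_mul_noiseKernel]
  ring

lemma stability_one_of_boolean {f : (Fin n → Bool) → ℝ} (hf : ∀ x, f x = 1 ∨ f x = -1) :
    stability p n f 1 = 1 := by
  simpa [stability, noiseOp_one, sq] using ex_sq_of_boolean (p := p) hf

end NoiseOperator

noncomputable def noiseKernelOff (p r : ℝ) {n : ℕ} (j : Fin n) (x y : Fin n → Bool) : ℝ :=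
  ∏ i ∈ univ.erase j, bitKernel p r (x i) (y i)

noncomputable def bitKernelDeriv (p : ℝ) (a b : Bool) : ℝ :=
  (if b = a then 1 else 0) - bitProb p b

section Derivative

variable {n : ℕ} {p r : ℝ}

lemma noiseKernelOff_update_left (j : Fin n) (x y : Fin n → Bool) (a : Bool) :
    noiseKernelOff p r j (Function.update x j a) y = noiseKernelOff p r j x y :=
  prod_congr rfl fun i hi => by rw [Function.update_of_ne (ne_of_mem_erase hi)]

lemma noiseKernelOff_update_right (j : Fin n) (x y : Fin n → Bool) (b : Bool) :
    noiseKernelOff p r j x (Function.update y j b) = noiseKernelOff p r j x y :=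
  prod_congr rfl fun i hi => by rw [Function.update_of_ne (ne_of_mem_erase hi)]

lemma coordDiff_update (f : (Fin n → Bool) → ℝ) (j : Fin n) (x : Fin n → Bool) (a : Bool) :
    coordDiff f j (Function.update x j a) = coordDiff f j x := by
  simp only [coordDiff, Function.update_idem]

lemma sum_noiseKernelOff_mul_of_update_eq {j : Fin n} {G : (Fin n → Bool) → ℝ}
    (hG : ∀ y b, G (Function.update y j b) = G y) (x : Fin n → Bool) :
    ∑ y, noiseKernelOff p r j x y * G y = 2 * noiseOp p r G x :=
  sum_prod_erase_mul_of_update_eq (fun i b => bitKernel p r (x i) b)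
    (bitKernel_true_add_false p r (x j)) hG

lemma hasDerivAt_bitKernel (p : ℝ) (a b : Bool) (r : ℝ) :
    HasDerivAt (fun r => bitKernel p r a b) (bitKernelDeriv p a b) r := by
  have h : (fun r => bitKernel p r a b) = fun r => r * bitKernelDeriv p a b + bitProb p b :=
    funext fun r => by unfold bitKernel bitKernelDeriv; split <;> ring
  rw [h]
  simpa using (hasDerivAt_mul_const (bitKernelDeriv p a b)).add_const (bitProb p b)

lemma hasDerivAt_noiseKernel (p : ℝ) (x y : Fin n → Bool) (r : ℝ) :
    HasDerivAt (fun r => noiseKernel p r x y)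
      (∑ j, noiseKernelOff p r j x y * bitKernelDeriv p (x j) (y j)) r := by
  have h := HasDerivAt.fun_finsetProd (u := univ)
    (fun i _ => hasDerivAt_bitKernel p (x i) (y i) r)
  simp only [smul_eq_mul] at h
  exact h

/-- The covariance identity `E[h k] - E[h] E[k] = p (1 - p) (h 1 - h 0) (k 1 - k 0)` on one bit. -/
lemma sum_bitProb_mul_bitKernelDeriv (p : ℝ) (h k : Bool → ℝ) :
    ∑ a, ∑ b, bitProb p a * bitKernelDeriv p a b * h a * k b
      = p * (1 - p) * ((h true - h false) * (k true - k false)) := by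
  simp only [Fintype.sum_bool, bitKernelDeriv, bitProb, ↓reduceIte, Bool.false_eq_true,
    Bool.true_eq_false]
  ring

/-- Updating bit `j` of both `x` and `y` in all four ways, the one-bit covariance identity
turns the `j`-th factor into `4 p (1 - p) ∂_j f(x) ∂_j f(y)`; the remaining weights then
collapse because `∂_j f` and `noiseKernelOff j` do not see bit `j`. -/
lemma sum_noiseKernelOff_mul_bitKernelDeriv (p r : ℝ) (f : (Fin n → Bool) → ℝ) (j : Fin n) :
    ∑ x, ∑ y, wt p n x * f x * f y * (noiseKernelOff p r j x y * bitKernelDeriv p (x j) (y j))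
      = 4 * (p * (1 - p)) * ex p n (fun x => coordDiff f j x * noiseOp p r (coordDiff f j) x) := by
  set W : (Fin n → Bool) → ℝ := fun x => ∏ i ∈ univ.erase j, bitProb p (x i)
  have hpair : ∀ x y, ∑ a, ∑ b, wt p n (Function.update x j a) * f (Function.update x j a)
      * f (Function.update y j b) * (noiseKernelOff p r j (Function.update x j a)
        (Function.update y j b) * bitKernelDeriv p (Function.update x j a j)
          (Function.update y j b j))
      = 4 * (p * (1 - p)) * (W x * (coordDiff f j x
          * (noiseKernelOff p r j x y * coordDiff f j y))) := fun x y => by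
    have hW : ∀ a, wt p n (Function.update x j a) = bitProb p a * W x := fun a =>
      prod_update_apply (fun _ b => bitProb p b) x j a
    have hcov := sum_bitProb_mul_bitKernelDeriv p (fun a => f (Function.update x j a))
      (fun b => f (Function.update y j b))
    simp only [Fintype.sum_bool, Function.update_self] at hcov ⊢
    simp only [hW, noiseKernelOff_update_left, noiseKernelOff_update_right, coordDiff]
    linear_combination (W x * noiseKernelOff p r j x y) * hcov
  have hsum : 4 * ∑ x, ∑ y, wt p n x * f x * f y
      * (noiseKernelOff p r j x y * bitKernelDeriv p (x j) (y j))
      = 4 * (p * (1 - p))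
          * ∑ x, W x * (coordDiff f j x * ∑ y, noiseKernelOff p r j x y * coordDiff f j y) := by
    rw [four_mul_sum_sum _ j]
    simp only [hpair, ← mul_sum]
  have hW2 : ∑ x, W x * (coordDiff f j x * ∑ y, noiseKernelOff p r j x y * coordDiff f j y)
      = 2 * ∑ x, wt p n x * (coordDiff f j x
          * ∑ y, noiseKernelOff p r j x y * coordDiff f j y) :=
    sum_prod_erase_mul_of_update_eq (fun _ b => bitProb p b) (bitProb_true_add_false p)
      fun x a => by simp only [coordDiff_update, noiseKernelOff_update_left]
  have hH : ∀ x, wt p n x * (coordDiff f j x * ∑ y, noiseKernelOff p r j x y * coordDiff f j y)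
      = 2 * (wt p n x * (coordDiff f j x * noiseOp p r (coordDiff f j) x)) := fun x => by
    rw [sum_noiseKernelOff_mul_of_update_eq (coordDiff_update f j)]; ring
  simp only [hW2, hH, ← mul_sum] at hsum
  simp only [ex]
  linarith

lemma hasDerivAt_stability (p : ℝ) (n : ℕ) (f : (Fin n → Bool) → ℝ) (r : ℝ) :
    HasDerivAt (stability p n f)
      (4 * (p * (1 - p)) * ∑ j, ex p n (fun x => coordDiff f j x * noiseOp p r (coordDiff f j) x))
      r := by
  have h : HasDerivAt (stability p n f)
      (∑ x, wt p n x * (f x * ∑ y, (∑ j, noiseKernelOff p r j x y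
        * bitKernelDeriv p (x j) (y j)) * f y)) r :=
    HasDerivAt.fun_sum fun x _ => ((HasDerivAt.fun_sum fun y _ =>
      (hasDerivAt_noiseKernel p x y r).mul_const (f y)).const_mul (f x)).const_mul (wt p n x)
  convert h using 1
  simp only [mul_sum, ← sum_noiseKernelOff_mul_bitKernelDeriv, sum_mul]
  rw [sum_comm]
  refine sum_congr rfl fun x _ => ?_
  rw [sum_comm]
  exact sum_congr rfl fun y _ => sum_congr rfl fun j _ => by ring

end Derivative

noncomputable def minBitVar (p r : ℝ) : ℝ :=
  (1 - r) * min p (1 - p) * (1 - (1 - r) * min p (1 - p))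

noncomputable def bitScore (p r : ℝ) (a b : Bool) : ℝ :=
  (if b then 1 else -1) / bitKernel p r a b

section ScoreEstimate

variable {n : ℕ} {p r : ℝ}

lemma sum_bitKernel_mul_bitScore_mul (hp : p ∈ Set.Ioo (0:ℝ) 1) (hr0 : 0 ≤ r) (hr1 : r < 1)
    (a : Bool) (h : Bool → ℝ) :
    ∑ b, bitKernel p r a b * (bitScore p r a b * h b) = h true - h false := by
  have hT := (bitKernel_pos hp hr0 hr1 a true).ne'
  have hF := (bitKernel_pos hp hr0 hr1 a false).ne'
  simp only [Fintype.sum_bool, bitScore, if_true, Bool.false_eq_true, if_false]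
  field_simp
  ring

lemma sum_bitKernel_mul_sq_bitScore (hp : p ∈ Set.Ioo (0:ℝ) 1) (hr0 : 0 ≤ r) (hr1 : r < 1)
    (a : Bool) :
    ∑ b, bitKernel p r a b * bitScore p r a b ^ 2
      = 1 / (bitKernel p r a true * bitKernel p r a false) := by
  have hT := (bitKernel_pos hp hr0 hr1 a true).ne'
  have hF := (bitKernel_pos hp hr0 hr1 a false).ne'
  have hsum := bitKernel_true_add_false p r a
  simp only [Fintype.sum_bool, bitScore, if_true, Bool.false_eq_true, if_false]
  field_simp
  linear_combination hsum

/-- Integration by parts against the score of the `j`-th output bit. -/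
lemma sum_noiseKernel_mul_bitScore_mul (hp : p ∈ Set.Ioo (0:ℝ) 1) (hr0 : 0 ≤ r) (hr1 : r < 1)
    (f : (Fin n → Bool) → ℝ) (j : Fin n) (x : Fin n → Bool) :
    ∑ y, noiseKernel p r x y * (bitScore p r (x j) (y j) * f y)
      = 2 * noiseOp p r (coordDiff f j) x := by
  have h := two_mul_sum_prod_mul (fun i b => bitKernel p r (x i) b)
    (fun y => bitScore p r (x j) (y j) * f y) j
  simp only [Function.update_self, sum_bitKernel_mul_bitScore_mul hp hr0 hr1] at h
  have h2 := sum_noiseKernelOff_mul_of_update_eq (p := p) (r := r) (coordDiff_update f j) x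
  simp only [coordDiff, noiseKernelOff, noiseKernel] at h h2 ⊢
  simp only [mul_div_assoc', ← sum_div] at h2
  linarith

lemma sum_noiseKernel_mul_bitScore_mul_bitScore (hp : p ∈ Set.Ioo (0:ℝ) 1) (hr0 : 0 ≤ r)
    (hr1 : r < 1) (x : Fin n → Bool) (j k : Fin n) :
    ∑ y, noiseKernel p r x y * (bitScore p r (x j) (y j) * bitScore p r (x k) (y k))
      = if j = k then 1 / (bitKernel p r (x j) true * bitKernel p r (x j) false) else 0 := by
  have h := two_mul_sum_prod_mul (fun i b => bitKernel p r (x i) b)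
    (fun y => bitScore p r (x j) (y j) * bitScore p r (x k) (y k)) j
  split_ifs with hjk
  · subst hjk
    have hmass := sum_noiseKernelOff_mul_of_update_eq (p := p) (r := r) (j := j) (G := fun _ => 1)
      (fun _ _ => rfl) x
    simp only [Function.update_self, ← sq, sum_bitKernel_mul_sq_bitScore hp hr0 hr1,
      ← sum_mul] at h
    simp only [noiseOp, mul_one, sum_noiseKernel, noiseKernelOff] at hmass
    simp only [noiseKernel, ← sq]
    rw [hmass] at h
    linarith
  · have hk : ∀ (y : Fin n → Bool) b, Function.update y j b k = y k := fun y b =>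
      Function.update_of_ne (Ne.symm hjk) _ _
    simp only [Function.update_self, hk, sum_bitKernel_mul_bitScore_mul hp hr0 hr1 (x j)
      (fun _ => _), sub_self, mul_zero, sum_const_zero] at h
    simp only [noiseKernel]
    linarith

lemma sum_noiseKernel_mul_sq_sum_bitScore (hp : p ∈ Set.Ioo (0:ℝ) 1) (hr0 : 0 ≤ r)
    (hr1 : r < 1) (x : Fin n → Bool) (u : Fin n → ℝ) :
    ∑ y, noiseKernel p r x y * (∑ j, u j * bitScore p r (x j) (y j)) ^ 2
      = ∑ j, u j ^ 2 / (bitKernel p r (x j) true * bitKernel p r (x j) false) := by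
  have hexpand : ∀ y, noiseKernel p r x y * (∑ j, u j * bitScore p r (x j) (y j)) ^ 2
      = ∑ j, ∑ k, u j * u k * (noiseKernel p r x y
          * (bitScore p r (x j) (y j) * bitScore p r (x k) (y k))) := fun y => by
    rw [sq, sum_mul_sum, mul_sum]
    exact sum_congr rfl fun j _ => by rw [mul_sum]; exact sum_congr rfl fun k _ => by ring
  simp only [hexpand]
  rw [sum_comm]
  refine sum_congr rfl fun j _ => ?_
  rw [sum_comm]
  simp only [← mul_sum, sum_noiseKernel_mul_bitScore_mul_bitScore hp hr0 hr1, mul_ite, mul_zero,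
    sum_ite_eq, mem_univ, if_true]
  ring

lemma min_le_one_half (p : ℝ) : min p (1 - p) ≤ 1 / 2 := by
  rcases le_total p (1 - p) with h | h
  · rw [min_eq_left h]; linarith
  · rw [min_eq_right h]; linarith

lemma minBitVar_le_bitKernel_mul_bitKernel (hp : p ∈ Set.Ioo (0:ℝ) 1) (hr0 : 0 ≤ r)
    (hr1 : r ≤ 1) (a : Bool) : minBitVar p r ≤ bitKernel p r a true * bitKernel p r a false := by
  unfold minBitVar
  have hm1 := min_le_left p (1 - p)
  have hm2 := min_le_right p (1 - p)
  have hm0 : 0 < min p (1 - p) := lt_min hp.1 (by linarith [hp.2])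
  cases a <;> simp only [bitKernel, bitProb, if_true, if_false, Bool.false_eq_true,
    Bool.true_eq_false] <;>
    nlinarith [mul_le_mul_of_nonneg_left hm1 (sub_nonneg.2 hr1),
      mul_le_mul_of_nonneg_left hm2 (sub_nonneg.2 hr1), mul_nonneg hr0 hm0.le]

lemma minBitVar_pos (hp : p ∈ Set.Ioo (0:ℝ) 1) (hr0 : 0 ≤ r) (hr1 : r < 1) :
    0 < minBitVar p r := by
  unfold minBitVar
  have hm0 : 0 < min p (1 - p) := lt_min hp.1 (by linarith [hp.2])
  have hm1 := min_le_one_half p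
  have hs0 : 0 < (1 - r) * min p (1 - p) := mul_pos (by linarith) hm0
  have hs1 : (1 - r) * min p (1 - p) ≤ 1 / 2 := by nlinarith
  exact mul_pos hs0 (by linarith)

end ScoreEstimate

section GradientBound

variable {n : ℕ} {p r : ℝ}

lemma sq_coordDiff (f : (Fin n → Bool) → ℝ) (j : Fin n) (x : Fin n → Bool) :
    coordDiff f j x ^ 2 = Dj j f x ^ 2 := by
  unfold coordDiff Dj flipC
  cases hx : x j
  · rw [← hx, Function.update_eq_self, hx, Bool.not_false]; ring
  · rw [← hx, Function.update_eq_self, hx, Bool.not_true]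

lemma gradNorm_eq_sqrt_sum_sq_coordDiff (f : (Fin n → Bool) → ℝ) (x : Fin n → Bool) :
    gradNorm f x = √(∑ j, coordDiff f j x ^ 2) := by
  simp only [gradNorm, sq_coordDiff]

lemma four_mul_sum_sq_noiseOp_coordDiff_le (hp : p ∈ Set.Ioo (0:ℝ) 1) (hr0 : 0 ≤ r)
    (hr1 : r < 1) {f : (Fin n → Bool) → ℝ} (hf : ∀ y, f y ^ 2 ≤ 1) (x : Fin n → Bool) :
    4 * minBitVar p r * ∑ j, noiseOp p r (coordDiff f j) x ^ 2 ≤ 1 := by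
  set c := minBitVar p r
  set U : Fin n → ℝ := fun j => noiseOp p r (coordDiff f j) x
  set S := ∑ j, U j ^ 2
  set W : (Fin n → Bool) → ℝ := fun y => ∑ j, U j * bitScore p r (x j) (y j)
  have hK := noiseKernel_nonneg hp hr0 hr1 x
  have hc : 0 < c := minBitVar_pos hp hr0 hr1
  have hfW : ∑ y, noiseKernel p r x y * (f y * W y) = 2 * S := by
    have h : ∀ y, noiseKernel p r x y * (f y * W y)
        = ∑ j, U j * (noiseKernel p r x y * (bitScore p r (x j) (y j) * f y)) := fun y => by
      simp only [W, mul_sum]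
      exact sum_congr rfl fun j _ => by ring
    simp only [h]
    rw [sum_comm]
    simp only [← mul_sum, sum_noiseKernel_mul_bitScore_mul hp hr0 hr1]
    simp only [S, mul_sum]
    exact sum_congr rfl fun j _ => by ring
  have hWW : c * ∑ y, noiseKernel p r x y * W y ^ 2 ≤ S := by
    rw [sum_noiseKernel_mul_sq_sum_bitScore hp hr0 hr1, mul_sum]
    refine sum_le_sum fun j _ => ?_
    have hkk := minBitVar_le_bitKernel_mul_bitKernel hp hr0 hr1.le (x j)
    rw [mul_div_assoc', div_le_iff₀ (hc.trans_le hkk), mul_comm c]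
    exact mul_le_mul_of_nonneg_left hkk (sq_nonneg _)
  have hff : ∑ y, noiseKernel p r x y * f y ^ 2 ≤ 1 :=
    (sum_le_sum fun y _ => mul_le_mul_of_nonneg_left (hf y) (hK y)).trans_eq
      (by simp only [mul_one, sum_noiseKernel])
  have hCS : (∑ y, noiseKernel p r x y * (f y * W y)) ^ 2
      ≤ (∑ y, noiseKernel p r x y * f y ^ 2) * ∑ y, noiseKernel p r x y * W y ^ 2 :=
    sum_sq_le_sum_mul_sum_of_sq_le_mul _ (fun y _ => mul_nonneg (hK y) (sq_nonneg _))
      (fun y _ => mul_nonneg (hK y) (sq_nonneg _)) fun y _ => le_of_eq (by ring)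
  have hS : 0 ≤ S := sum_nonneg fun j _ => sq_nonneg _
  have hWnn : 0 ≤ ∑ y, noiseKernel p r x y * W y ^ 2 :=
    sum_nonneg fun y _ => mul_nonneg (hK y) (sq_nonneg _)
  rw [hfW] at hCS
  have h4S : c * (2 * S) ^ 2 ≤ S :=
    (mul_le_mul_of_nonneg_left (hCS.trans (mul_le_of_le_one_left hWnn hff)) hc.le).trans hWW
  have hSS : (4 * c * S) * S ≤ 1 * S := by linarith
  rcases hS.eq_or_lt with h0 | hpos
  · rw [← h0]; linarith
  · exact le_of_mul_le_mul_right hSS hpos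

lemma deriv_stability_le (hp : p ∈ Set.Ioo (0:ℝ) 1) (hr0 : 0 ≤ r) (hr1 : r < 1)
    {f : (Fin n → Bool) → ℝ} (hf : ∀ y, f y ^ 2 ≤ 1) :
    4 * (p * (1 - p)) * ∑ j, ex p n (fun x => coordDiff f j x * noiseOp p r (coordDiff f j) x)
      ≤ 2 * (p * (1 - p)) * ex p n (gradNorm f) / √(minBitVar p r) := by
  set c := minBitVar p r
  have hc : 0 < c := minBitVar_pos hp hr0 hr1
  have hsc : 0 < √c := sqrt_pos.2 hc
  have hpq : 0 < p * (1 - p) := mul_pos hp.1 (by linarith [hp.2])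
  have hpoint : ∀ x, ∑ j, coordDiff f j x * noiseOp p r (coordDiff f j) x
      ≤ gradNorm f x / (2 * √c) := fun x => by
    have hU := four_mul_sum_sq_noiseOp_coordDiff_le hp hr0 hr1 hf x
    have hroot : 2 * √c * √(∑ j, noiseOp p r (coordDiff f j) x ^ 2) ≤ 1 := by
      rw [← sqrt_one, show (2:ℝ) = √4 by rw [show (4:ℝ) = 2 ^ 2 by norm_num, sqrt_sq two_pos.le],
        ← sqrt_mul (by norm_num), ← sqrt_mul (by linarith)]
      exact sqrt_le_sqrt (by linarith)
    rw [le_div_iff₀ (by positivity), gradNorm_eq_sqrt_sum_sq_coordDiff]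
    calc (∑ j, coordDiff f j x * noiseOp p r (coordDiff f j) x) * (2 * √c)
        ≤ (√(∑ j, coordDiff f j x ^ 2) * √(∑ j, noiseOp p r (coordDiff f j) x ^ 2)) * (2 * √c) :=
          mul_le_mul_of_nonneg_right (sum_mul_le_sqrt_mul_sqrt _ _ _) (by positivity)
      _ ≤ √(∑ j, coordDiff f j x ^ 2) * 1 := by
          rw [mul_assoc]
          exact mul_le_mul_of_nonneg_left (by linarith) (sqrt_nonneg _)
      _ = √(∑ j, coordDiff f j x ^ 2) := mul_one _
  calc 4 * (p * (1 - p)) * ∑ j, ex p n (fun x => coordDiff f j x * noiseOp p r (coordDiff f j) x)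
      ≤ 4 * (p * (1 - p)) * (ex p n (gradNorm f) / (2 * √c)) := by
        rw [sum_ex, ← ex_div]
        exact mul_le_mul_of_nonneg_left (ex_mono hp hpoint) (by positivity)
    _ = 2 * (p * (1 - p)) * ex p n (gradNorm f) / √c := by
        field_simp
        ring

end GradientBound

section Integration

lemma sub_le_sub_of_hasDerivAt_le {φ G φ' G' : ℝ → ℝ} {a b : ℝ} (hab : a ≤ b)
    (hφ : ContinuousOn φ (Set.Icc a b)) (hG : ContinuousOn G (Set.Icc a b))
    (hφ' : ∀ x ∈ Set.Ioo a b, HasDerivAt φ (φ' x) x)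
    (hG' : ∀ x ∈ Set.Ioo a b, HasDerivAt G (G' x) x)
    (hle : ∀ x ∈ Set.Ioo a b, φ' x ≤ G' x) : φ b - φ a ≤ G b - G a := by
  have hmono : MonotoneOn (fun x => G x - φ x) (Set.Icc a b) :=
    monotoneOn_of_hasDerivWithinAt_nonneg (convex_Icc a b) (hG.sub hφ)
      (fun x hx => by
        rw [interior_Icc] at hx ⊢; exact ((hG' x hx).sub (hφ' x hx)).hasDerivWithinAt)
      (fun x hx => by rw [interior_Icc] at hx; exact sub_nonneg.2 (hle x hx))
  have := hmono ⟨le_rfl, hab⟩ ⟨hab, le_rfl⟩ hab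
  simp only at this
  linarith

/-- Chord bound from the concavity of `sin` on `[0, π / 4]`. -/
lemma two_mul_sqrt_two_mul_arcsin_le {y : ℝ} (hy0 : 0 ≤ y) (hy1 : y ≤ √2 / 2) :
    2 * √2 * arcsin y ≤ π * y := by
  have hsqrt2 : √2 / 2 ≤ 1 := by
    rw [div_le_one two_pos, sqrt_le_left (by norm_num)]; norm_num
  have hθ0 : 0 ≤ arcsin y := arcsin_nonneg.2 hy0
  have hθ1 : arcsin y ≤ π / 4 := by
    calc arcsin y ≤ arcsin (√2 / 2) := arcsin_le_arcsin hy1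
      _ = π / 4 := by
        rw [← sin_pi_div_four, arcsin_sin (by linarith [pi_pos]) (by linarith [pi_pos])]
  have hconc := strictConcaveOn_sin_Icc.concaveOn.2 (show (0:ℝ) ∈ Set.Icc 0 π from
    ⟨le_rfl, pi_pos.le⟩) (show π / 4 ∈ Set.Icc 0 π from ⟨by positivity, by linarith [pi_pos]⟩)
    (show 0 ≤ 1 - 4 * arcsin y / π by rw [sub_nonneg, div_le_one pi_pos]; linarith)
    (show 0 ≤ 4 * arcsin y / π by positivity) (by ring)
  have hb : 4 * arcsin y / π * (π / 4) = arcsin y := by field_simp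
  simp only [smul_eq_mul, sin_zero, mul_zero, zero_add, hb, sin_pi_div_four,
    sin_arcsin (by linarith) (hy1.trans hsqrt2)] at hconc
  rw [div_mul_eq_mul_div, div_le_iff₀ pi_pos] at hconc
  nlinarith [sq_sqrt (show (0:ℝ) ≤ 2 by norm_num)]

lemma hasDerivAt_arcsin_sqrt_mul {a u : ℝ} (hau : 0 < a * u) (hau1 : a * u < 1) :
    HasDerivAt (fun u => arcsin √(a * u)) (a / (2 * √(a * u * (1 - a * u)))) u := by
  have h1 := ((hasDerivAt_id u).const_mul a).sqrt hau.ne'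
  have h2 := (hasDerivAt_arcsin (x := √(a * u)) (by linarith [sqrt_nonneg (a * u)])
    ((sqrt_lt' one_pos).2 (by linarith)).ne).comp u h1
  refine h2.congr_deriv ?_
  have : 0 < √(1 - a * u) := sqrt_pos.2 (by linarith)
  have : 0 < √(a * u) := sqrt_pos.2 hau
  rw [sq_sqrt hau.le, sqrt_mul hau.le]
  simp only [id, mul_one]
  field_simp

lemma two_mul_arcsin_sqrt_mul_le {a d : ℝ} (ha0 : 0 ≤ a) (ha : a ≤ 1 / 2) (hd0 : 0 ≤ d)
    (hd1 : d ≤ 1) : 2 * arcsin √(a * d) ≤ √(π * d) := by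
  have had : a * d ≤ d / 2 := by nlinarith
  have hy : √(a * d) ≤ √2 / 2 := by
    rw [sqrt_le_left (by positivity), div_pow, sq_sqrt (by norm_num)]; linarith
  have hchord := two_mul_sqrt_two_mul_arcsin_le (sqrt_nonneg _) hy
  have hπy : π * √(a * d) ≤ √2 * √(π * d) := by
    rw [← sqrt_mul (by norm_num), le_sqrt (by positivity) (by positivity), mul_pow,
      sq_sqrt (by positivity)]
    nlinarith [mul_le_mul_of_nonneg_left had (sq_nonneg π),
      mul_nonneg (mul_nonneg pi_pos.le (sub_nonneg.2 pi_le_four)) hd0]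
  have h2 : 0 < √2 := by positivity
  nlinarith

end Integration

section StabilityBound

variable {n : ℕ} {p : ℝ}

/-- At `r = 1 - u` the bound of `deriv_stability_le` is the derivative of
`4 max(p, 1 - p) E|∇f| arcsin √(min(p, 1 - p) u)`. -/
lemma stability_one_sub_stability_le (hp : p ∈ Set.Ioo (0:ℝ) 1) {f : (Fin n → Bool) → ℝ}
    (hf : ∀ y, f y ^ 2 ≤ 1) {d : ℝ} (hd0 : 0 ≤ d) (hd1 : d < 1) :
    stability p n f 1 - stability p n f (1 - d)
      ≤ 2 * max p (1 - p) * √(π * d) * ex p n (gradNorm f) := by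
  set a := min p (1 - p)
  set M := max p (1 - p)
  set E := ex p n (gradNorm f)
  have ha0 : 0 < a := lt_min hp.1 (by linarith [hp.2])
  have ha1 : a ≤ 1 / 2 := min_le_one_half p
  have hE : 0 ≤ E := ex_nonneg hp fun x => sqrt_nonneg _
  have hM : 0 ≤ M := hp.1.le.trans (le_max_left _ _)
  have hφ : ∀ u, HasDerivAt (fun u => -stability p n f (1 - u))
      (4 * (p * (1 - p)) * ∑ j, ex p n (fun x =>
        coordDiff f j x * noiseOp p (1 - u) (coordDiff f j) x)) u := fun u => by
    have h := ((hasDerivAt_stability p n f (1 - u)).comp u ((hasDerivAt_id u).const_sub 1)).neg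
    simp only [mul_neg, mul_one, neg_neg] at h
    exact h
  have hG : ∀ u ∈ Set.Ioo 0 d, HasDerivAt (fun u => 4 * M * E * arcsin √(a * u))
      (4 * M * E * (a / (2 * √(a * u * (1 - a * u))))) u := fun u hu =>
    (hasDerivAt_arcsin_sqrt_mul (mul_pos ha0 hu.1) (by nlinarith [hu.2])).const_mul _
  have hle : ∀ u ∈ Set.Ioo 0 d, 4 * (p * (1 - p)) * ∑ j, ex p n (fun x =>
      coordDiff f j x * noiseOp p (1 - u) (coordDiff f j) x)
        ≤ 4 * M * E * (a / (2 * √(a * u * (1 - a * u)))) := fun u hu => by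
    have hvar : minBitVar p (1 - u) = a * u * (1 - a * u) := by
      simp only [minBitVar, sub_sub_cancel, a]; ring
    refine (deriv_stability_le hp (by linarith [hu.2]) (by linarith [hu.1]) hf).trans_eq ?_
    rw [hvar, ← max_mul_min p (1 - p)]
    ring
  have hφc : ContinuousOn (fun u => -stability p n f (1 - u)) (Set.Icc 0 d) :=
    (continuous_iff_continuousAt.2 fun u => (hφ u).continuousAt).continuousOn
  have hGc : ContinuousOn (fun u => 4 * M * E * arcsin √(a * u)) (Set.Icc 0 d) :=
    (continuous_const.mul (continuous_arcsin.comp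
      (continuous_const.mul continuous_id).sqrt)).continuousOn
  have hcmp := sub_le_sub_of_hasDerivAt_le hd0 hφc hGc (fun u _ => hφ u) hG hle
  have harc := two_mul_arcsin_sqrt_mul_le ha0.le ha1 hd0 hd1.le
  simp only [sub_zero, mul_zero, sqrt_zero, arcsin_zero] at hcmp
  nlinarith [mul_le_mul_of_nonneg_left harc (mul_nonneg hM hE)]

end StabilityBound

theorem stmt10 (p : ℝ) (hp : p ∈ Set.Ioo (0:ℝ) 1) (n : ℕ) (t : ℝ) (ht : 0 ≤ t)
    (f : (Fin n → Bool) → ℝ) (hf : ∀ x, f x = 1 ∨ f x = -1) :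
    var p n f - var p n (heatPt p t n f) = 1 - ex p n (fun x => |heatPt p t n f x| ^ 2)
    ∧ 1 - ex p n (fun x => |heatPt p t n f x| ^ 2)
        ≤ 2 * max p (1 - p) * Real.sqrt (Real.pi * (1 - Real.exp (-2 * t)))
          * ex p n (gradNorm f) := by
  have hsq : ex p n (fun x => |heatPt p t n f x| ^ 2)
      = stability p n f (1 - (1 - exp (-2 * t))) := by
    simp only [sq_abs, heatPt_eq_noiseOp, ex_noiseOp_sq, sub_sub_cancel, ← exp_add]
    ring_nf
  have hf2 : ∀ x, f x ^ 2 ≤ 1 := fun x => by rcases hf x with h | h <;> simp [h]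
  have hd0 : 0 ≤ 1 - exp (-2 * t) := by linarith [exp_le_one_iff.2 (by linarith : -2 * t ≤ 0)]
  have hd1 : 1 - exp (-2 * t) < 1 := by linarith [exp_pos (-2 * t)]
  refine ⟨?_, ?_⟩
  · simp only [var, heatPt_eq_noiseOp, ex_noiseOp, ex_sq_of_boolean hf, sq_abs]
    ring
  · have h := stability_one_sub_stability_le hp hf2 hd0 hd1
    rwa [stability_one_of_boolean hf, ← hsq] at h
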